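/- Let A and B be nonzero log-concave nonnegative sequences without internal zeros. Then A is partially synchronized with B if and only if: (i) |h(A) - h(B)| ≤ 1; (ii) |t(A) - t(B)| ≤ 1; and (iii) the inequality a_m b_n + a_n b_m ≥ a_{m+1}b_{n-1} + a_{n-1}b_{m+1} holds for all integers m ≥ n with max{h(A), h(B)} ≤ m ≤ max{t(A), t(B)} − 1 and min{h(A), h(B)} + 1 ≤ n ≤ min{t(A), t(B)}. -/

import Mathlib

def LogConcave (a : ℤ → ℝ) : Prop := ∀ k : ℤ, a (k - 1) * a (k + 1) ≤ a k ^ 2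

def NoInternalZeros (a : ℤ → ℝ) : Prop :=
  ∀ i j k : ℤ, i < j → 0 < a i * a j → i ≤ k → k ≤ j → 0 < a k

def Nonneg (a : ℤ → ℝ) : Prop := ∀ k : ℤ, 0 ≤ a k

def Sync (a b : ℤ → ℝ) : Prop :=
  ∀ k : ℤ, a (k - 1) * b (k + 1) ≤ a k * b k ∧ a (k + 1) * b (k - 1) ≤ a k * b k

def WeakSync (a b : ℤ → ℝ) : Prop :=
  ∀ k : ℤ, a (k - 1) * b (k + 1) + a (k + 1) * b (k - 1) ≤ 2 * (a k * b k)

def PartSync (a b : ℤ → ℝ) : Prop :=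
  ∀ m n : ℤ, n ≤ m →
    a (m + 1) * b (n - 1) + a (n - 1) * b (m + 1) ≤ a m * b n + a n * b m

noncomputable def conv (a b : ℤ → ℝ) : ℤ → ℝ := fun n => ∑ᶠ k : ℤ, a k * b (n - k)

/-! Both directions only look at the supports. If, say, `h(B) ≥ h(A) + 2`, then in the instance
`m = h(B) - 1`, `n = h(A) + 1` the smaller side contains the positive term `a_{h(A)} b_{h(B)}`,
while every term of the larger side has a factor `b_k` with `k < h(B)` and vanishes; the tails are
handled in the same way. Conversely, a term `a_{m+1} b_{n-1}` or `a_{n-1} b_{m+1}` of the smaller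
side is positive only when its indices lie in the supports, and when heads and tails are at
distance at most one this forces `(m, n)` into the box of (iii); otherwise the smaller side is `0`. -/

variable {a b : ℤ → ℝ}

theorem PartSync.symm (h : PartSync a b) : PartSync b a := by
  intro m n hmn
  linarith [h m n hmn, mul_comm (a (m + 1)) (b (n - 1)), mul_comm (a (n - 1)) (b (m + 1)),
    mul_comm (a m) (b n), mul_comm (a n) (b m)]

theorem PartSync.pos_of_pos (h : PartSync a b) (ha : Nonneg a) (hb : Nonneg b) {i j : ℤ}
    (hij : i + 2 ≤ j) (hi : 0 < a i) (hj : 0 < b j) :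
    0 < a (j - 1) * b (i + 1) + a (i + 1) * b (j - 1) := by
  have key := h (j - 1) (i + 1) (by omega)
  rw [sub_add_cancel, add_sub_cancel_right] at key
  nlinarith [mul_pos hi hj, mul_nonneg (ha j) (hb i)]

theorem PartSync.head_le_add_one (h : PartSync a b) (ha : Nonneg a) (hb : Nonneg b) {i j : ℤ}
    (hi : 0 < a i) (hj : 0 < b j) (hb_lt : ∀ k < j, b k = 0) : j ≤ i + 1 := by
  by_contra! hij
  have := h.pos_of_pos ha hb (by omega) hi hj
  rw [hb_lt (i + 1) (by omega), hb_lt (j - 1) (by omega)] at this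
  simp at this

theorem PartSync.le_tail_add_one (h : PartSync a b) (ha : Nonneg a) (hb : Nonneg b) {i j : ℤ}
    (hi : 0 < a i) (ha_gt : ∀ k > i, a k = 0) (hj : 0 < b j) : j ≤ i + 1 := by
  by_contra! hij
  have := h.pos_of_pos ha hb (by omega) hi hj
  rw [ha_gt (j - 1) (by omega), ha_gt (i + 1) (by omega)] at this
  simp at this

theorem le_and_le_of_ne_zero {h t k : ℤ} (h_lt : ∀ k < h, a k = 0) (h_gt : ∀ k > t, a k = 0)
    (hk : a k ≠ 0) : h ≤ k ∧ k ≤ t :=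
  ⟨not_lt.1 fun hlt => hk (h_lt k hlt), not_lt.1 fun hlt => hk (h_gt k hlt)⟩

theorem partSync_of_supports {ha' ta hb' tb : ℤ} (ha : Nonneg a) (hb : Nonneg b)
    (ha_lt : ∀ k < ha', a k = 0) (ha_gt : ∀ k > ta, a k = 0)
    (hb_lt : ∀ k < hb', b k = 0) (hb_gt : ∀ k > tb, b k = 0)
    (hh : |ha' - hb'| ≤ 1) (ht : |ta - tb| ≤ 1)
    (hbox : ∀ m n : ℤ, n ≤ m →
      max ha' hb' ≤ m → m ≤ max ta tb - 1 →
      min ha' hb' + 1 ≤ n → n ≤ min ta tb →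
      a (m + 1) * b (n - 1) + a (n - 1) * b (m + 1) ≤ a m * b n + a n * b m) :
    PartSync a b := by
  rw [abs_le] at hh ht
  intro m n hmn
  have hA := fun k (hk : 0 < a k) => le_and_le_of_ne_zero ha_lt ha_gt hk.ne'
  have hB := fun k (hk : 0 < b k) => le_and_le_of_ne_zero hb_lt hb_gt hk.ne'
  by_cases h₁ : 0 < a (m + 1) * b (n - 1)
  · have := hA _ (pos_of_mul_pos_left h₁ (hb _))
    have := hB _ (pos_of_mul_pos_right h₁ (ha _))
    exact hbox m n hmn (by omega) (by omega) (by omega) (by omega)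
  by_cases h₂ : 0 < a (n - 1) * b (m + 1)
  · have := hA _ (pos_of_mul_pos_left h₂ (hb _))
    have := hB _ (pos_of_mul_pos_right h₂ (ha _))
    exact hbox m n hmn (by omega) (by omega) (by omega) (by omega)
  linarith [not_lt.1 h₁, not_lt.1 h₂, mul_nonneg (ha m) (hb n), mul_nonneg (ha n) (hb m)]

theorem stmt6_general (A B : ℤ → ℝ) (hA : Nonneg A) (hB : Nonneg B)
    (hA' tA hB' tB : ℤ)
    (hhA : 0 < A hA' ∧ ∀ k < hA', A k = 0)
    (htA : 0 < A tA ∧ ∀ k > tA, A k = 0)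
    (hhB : 0 < B hB' ∧ ∀ k < hB', B k = 0)
    (htB : 0 < B tB ∧ ∀ k > tB, B k = 0) :
    PartSync A B ↔
      (|hA' - hB'| ≤ 1 ∧ |tA - tB| ≤ 1 ∧
        ∀ m n : ℤ, n ≤ m →
          max hA' hB' ≤ m → m ≤ max tA tB - 1 →
          min hA' hB' + 1 ≤ n → n ≤ min tA tB →
          A (m + 1) * B (n - 1) + A (n - 1) * B (m + 1) ≤ A m * B n + A n * B m) := by
  constructor
  · intro h
    refine ⟨abs_le.2 ⟨?_, ?_⟩, abs_le.2 ⟨?_, ?_⟩, fun m n hmn _ _ _ _ => h m n hmn⟩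
    · linarith [h.head_le_add_one hA hB hhA.1 hhB.1 hhB.2]
    · linarith [h.symm.head_le_add_one hB hA hhB.1 hhA.1 hhA.2]
    · linarith [h.le_tail_add_one hA hB htA.1 htA.2 htB.1]
    · linarith [h.symm.le_tail_add_one hB hA htB.1 htB.2 htA.1]
  · rintro ⟨hh, ht, hbox⟩
    exact partSync_of_supports hA hB hhA.2 htA.2 hhB.2 htB.2 hh ht hbox

theorem stmt6 (A B : ℤ → ℝ) (hA : Nonneg A) (hB : Nonneg B)
    (hAlc : LogConcave A) (hAnz : NoInternalZeros A)
    (hBlc : LogConcave B) (hBnz : NoInternalZeros B)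
    (hA' tA hB' tB : ℤ)
    (hhA : 0 < A hA' ∧ ∀ k < hA', A k = 0)
    (htA : 0 < A tA ∧ ∀ k > tA, A k = 0)
    (hhB : 0 < B hB' ∧ ∀ k < hB', B k = 0)
    (htB : 0 < B tB ∧ ∀ k > tB, B k = 0) :
    PartSync A B ↔
      (|hA' - hB'| ≤ 1 ∧ |tA - tB| ≤ 1 ∧
        ∀ m n : ℤ, n ≤ m →
          max hA' hB' ≤ m → m ≤ max tA tB - 1 →
          min hA' hB' + 1 ≤ n → n ≤ min tA tB →
          A (m + 1) * B (n - 1) + A (n - 1) * B (m + 1) ≤ A m * B n + A n * B m) :=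
  stmt6_general A B hA hB hA' tA hB' tB hhA htA hhB htB
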